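/- arXiv:0807.2191 — 7 statements merged into one kernel-verified Lean document; each statement's English description precedes it below -/
import Mathlib

section
/- Let R be a commutative ring with an action of a finite group G by ring automorphisms, and assume the order |G| is invertible in R. If I and J are G-stable ideals of R with I + J = R, then (I ∩ R^G) + (J ∩ R^G) = R^G. (Geometrically: disjoint closed G-invariant subsets of Spec R have disjoint images in Spec R^G.) -/
/-!
Averaging over `G`, `ρ x = |G|⁻¹ ∑_g g • x` (the Reynolds operator), is additive, fixes `1`,
takes values in `R^G` and maps every `G`-stable ideal into itself. Applying it to a decomposition
`1 = a + b` with `a ∈ I`, `b ∈ J` gives `1 = ρ a + ρ b` with `ρ a ∈ I ∩ R^G`, `ρ b ∈ J ∩ R^G`.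
-/

open scoped Pointwise

/-- The invariant subring `R^G` of a group acting on a commutative ring by
ring automorphisms. -/
def fixedSubring (G R : Type*) [Group G] [CommRing R] [MulSemiringAction G R] :
    Subring R where
  carrier := {x : R | ∀ g : G, g • x = x}
  one_mem' := fun g => smul_one g
  mul_mem' := by
    intro a b ha hb g
    rw [smul_mul', ha g, hb g]
  zero_mem' := fun g => smul_zero g
  add_mem' := by
    intro a b ha hb g
    rw [smul_add, ha g, hb g]
  neg_mem' := by
    intro a ha g
    rw [smul_neg, ha g]

theorem val_inv_mem_fixedSubring {G R : Type*} [Group G] [CommRing R] [MulSemiringAction G R]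
    {u : Rˣ} (hu : (u : R) ∈ fixedSubring G R) : ((u⁻¹ : Rˣ) : R) ∈ fixedSubring G R := by
  intro g
  refine Units.eq_inv_of_mul_eq_one_left ?_
  rw [← hu g, ← smul_mul', Units.mul_inv, smul_one]

section Reynolds

variable {G : Type*} [Group G] [Fintype G]

theorem smul_sum_smul {M : Type*} [AddCommMonoid M] [DistribMulAction G M] (h : G) (x : M) :
    h • ∑ g : G, g • x = ∑ g : G, g • x := by
  rw [Finset.smul_sum]
  simp_rw [smul_smul]
  exact Fintype.sum_equiv (Equiv.mulLeft h) _ _ fun _ => rfl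

variable {R : Type*} [CommRing R] [MulSemiringAction G R]

noncomputable def reynolds (hG : IsUnit (Nat.card G : R)) (x : R) : R :=
  ((hG.unit⁻¹ : Rˣ) : R) * ∑ g : G, g • x

variable (hG : IsUnit (Nat.card G : R))

theorem reynolds_add (x y : R) : reynolds hG (x + y) = reynolds hG x + reynolds hG y := by
  simp only [reynolds, smul_add, Finset.sum_add_distrib, mul_add]

theorem reynolds_one : reynolds hG (1 : R) = 1 := by
  simp only [reynolds, smul_one, Finset.sum_const, Finset.card_univ, nsmul_one,
    ← Nat.card_eq_fintype_card]
  exact hG.val_inv_mul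

theorem reynolds_mem_fixedSubring (x : R) : reynolds hG x ∈ fixedSubring G R :=
  Subring.mul_mem _ (val_inv_mem_fixedSubring <| by rw [hG.unit_spec]; exact natCast_mem _ _)
    (smul_sum_smul · x)

theorem reynolds_mem {K : Ideal R} (hK : ∀ g : G, g • (K : Set R) ⊆ K) {x : R} (hx : x ∈ K) :
    reynolds hG x ∈ K :=
  K.mul_mem_left _ <| K.sum_mem fun g _ => hK g (Set.smul_mem_smul_set hx)

end Reynolds

/-- Let a finite group `G` act on a commutative ring `R` by ring automorphisms, with `|G|`
invertible in `R`.  If `I` and `J` are `G`-stable ideals with `I + J = R`, then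
`(I ∩ R^G) + (J ∩ R^G) = R^G` (where the intersections are regarded as ideals of `R^G` via
pullback along the inclusion `R^G ↪ R`). -/
theorem statement4 (R : Type*) [CommRing R] (G : Type*) [Group G] [Finite G]
    [MulSemiringAction G R] (hunit : IsUnit ((Nat.card G : ℕ) : R))
    (I J : Ideal R)
    (hI : ∀ g : G, g • (I : Set R) = (I : Set R))
    (hJ : ∀ g : G, g • (J : Set R) = (J : Set R))
    (hIJ : I ⊔ J = ⊤) :
    Ideal.comap (fixedSubring G R).subtype I ⊔ Ideal.comap (fixedSubring G R).subtype J = ⊤ := by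
  have := Fintype.ofFinite G
  obtain ⟨a, ha, b, hb, hab⟩ := Submodule.mem_sup.mp (hIJ ▸ Submodule.mem_top : (1 : R) ∈ I ⊔ J)
  rw [Ideal.eq_top_iff_one, Submodule.mem_sup]
  exact ⟨⟨reynolds hunit a, reynolds_mem_fixedSubring hunit a⟩,
    reynolds_mem hunit (fun g => (hI g).subset) ha,
    ⟨reynolds hunit b, reynolds_mem_fixedSubring hunit b⟩,
    reynolds_mem hunit (fun g => (hJ g).subset) hb,
    Subtype.ext <| by rw [Subring.coe_add, ← reynolds_add, hab, reynolds_one, Subring.coe_one]⟩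
end

section
/- Let k be a field, Λ a finitely generated abelian group with group algebra k[Λ], and R a commutative k-algebra. Write ε : k[Λ] → k for the k-algebra homomorphism with ε(λ) = 1 for all λ ∈ Λ, and Δ : k[Λ] → k[Λ] ⊗_k k[Λ] for the k-algebra homomorphism with Δ(λ) = λ ⊗ λ. Then there is a bijection between: (a) k-algebra homomorphisms μ : R → k[Λ] ⊗_k R satisfying (ε ⊗ id_R) ∘ μ = id_R (under the canonical identification k ⊗_k R ≅ R) and (id_{k[Λ]} ⊗ μ) ∘ μ = (Δ ⊗ id_R) ∘ μ; and (b) Λ-gradings of R, i.e. families (R_χ)_{χ∈Λ} of k-submodules of R such that R is the internal direct sum ⊕_{χ∈Λ} R_χ, 1 ∈ R₀, and R_χ · R_{χ′} ⊆ R_{χ+χ′} for all χ, χ′ ∈ Λ. Under this bijection, the grading attached to μ is given by R_χ = { f ∈ R : μ(f) = λ_χ ⊗ f }, where λ_χ denotes the basis element of k[Λ] corresponding to χ. -/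
open TensorProduct

/-- The counit `ε : k[Λ] → k` of the group algebra, with `ε(λ) = 1` on group basis elements. -/
noncomputable def groupAlgCounit (k Λ : Type*) [CommSemiring k] [AddCommGroup Λ] :
    AddMonoidAlgebra k Λ →ₐ[k] k :=
  AddMonoidAlgebra.lift k k Λ 1

/-- The diagonal `λ ↦ λ ⊗ λ` as a monoid homomorphism into the tensor square of the group
algebra. -/
noncomputable def groupAlgDiagHom (k Λ : Type*) [CommSemiring k] [AddCommGroup Λ] :
    Multiplicative Λ →* (AddMonoidAlgebra k Λ ⊗[k] AddMonoidAlgebra k Λ) where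
  toFun χ :=
    AddMonoidAlgebra.single (Multiplicative.toAdd χ) 1 ⊗ₜ[k]
      AddMonoidAlgebra.single (Multiplicative.toAdd χ) 1
  map_one' := by
    rw [toAdd_one, ← AddMonoidAlgebra.one_def, Algebra.TensorProduct.one_def]
  map_mul' a b := by
    rw [toAdd_mul, Algebra.TensorProduct.tmul_mul_tmul,
      AddMonoidAlgebra.single_mul_single, one_mul]

/-- The comultiplication `Δ : k[Λ] → k[Λ] ⊗ k[Λ]` of the group algebra, with
`Δ(λ) = λ ⊗ λ` on group basis elements. -/
noncomputable def groupAlgComul (k Λ : Type*) [CommSemiring k] [AddCommGroup Λ] :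
    AddMonoidAlgebra k Λ →ₐ[k] (AddMonoidAlgebra k Λ ⊗[k] AddMonoidAlgebra k Λ) :=
  AddMonoidAlgebra.lift k _ Λ (groupAlgDiagHom k Λ)

/-!
Identifying `k[Λ] ⊗ M` with `Λ →₀ M`, a linear map `ρ : M → k[Λ] ⊗ M` is a family of components,
`ρ m = ∑ λ_χ ⊗ m_χ`. The counit law says `m = ∑ m_χ`, and coassociativity says that every `m_χ` lies
in `M_χ = {x | ρ x = λ_χ ⊗ x}`. Since the components of an element of `M_χ` are concentrated in
degree `χ`, the `M_χ` form an internal direct sum with projections `m ↦ m_χ`. Conversely an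
internal direct sum defines `ρ m = ∑ λ_χ ⊗ m_χ`, and the two constructions are inverse to each other
because a linear map is determined by its values on the summands. For an algebra `R`, `ρ` is
multiplicative exactly when `1 ∈ R_0` and `R_χ R_χ' ⊆ R_(χ+χ')`.
-/
namespace DirectSum

variable {k ι M : Type*} [Ring k] [AddCommGroup M] [Module k M] [DecidableEq ι]
  {ℬ : ι → Submodule k M}

theorem isInternal_submodule_of_finsupp_decomposition (P : M →ₗ[k] ι →₀ M)
    (hmem : ∀ m i, P m i ∈ ℬ i)    (hsum : ∀ m, (P m).sum (fun _ x => x) = m)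
    (hsingle : ∀ i, ∀ m ∈ ℬ i, P m = Finsupp.single i m) :
    IsInternal ℬ := by
  refine isInternal_submodule_of_iSupIndep_of_iSup_eq_top (iSupIndep_def.mpr fun i => ?_) ?_
  · have hker : ⨆ (j) (_ : j ≠ i), ℬ j ≤ LinearMap.ker (Finsupp.lapply i ∘ₗ P) :=
      iSup₂_le fun j hj m hm => by simp [hsingle j m hm, Finsupp.single_eq_of_ne' hj]
    refine Submodule.disjoint_def.mpr fun m hm hm' => ?_
    simpa [hsingle i m hm] using hker hm'
  · refine Submodule.eq_top_iff'.mpr fun m => hsum m ▸ Submodule.sum_mem _ fun i _ => ?_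
    exact Submodule.mem_iSup_of_mem i (hmem m i)

namespace IsInternal

theorem induction_on (h : IsInternal ℬ) {motive : M → Prop} (m : M)
    (mem : ∀ i, ∀ x ∈ ℬ i, motive x) (zero : motive 0)
    (add : ∀ x y, motive x → motive y → motive (x + y)) : motive m :=
  Submodule.iSup_induction ℬ (motive := motive) (h.submodule_iSup_eq_top ▸ Submodule.mem_top)
    mem zero add

theorem linearMap_ext {N : Type*} [AddCommMonoid N] [Module k N] (h : IsInternal ℬ)
    {f g : M →ₗ[k] N} (hfg : ∀ i, ∀ m ∈ ℬ i, f m = g m) : f = g :=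
  LinearMap.ext fun m => h.induction_on m hfg (by simp) fun x y hx hy => by simp [hx, hy]

noncomputable def finsuppDecompose (h : IsInternal ℬ) : M →ₗ[k] ι →₀ M :=
  toModule k ι (ι →₀ M) (fun i => Finsupp.lsingle i ∘ₗ (ℬ i).subtype) ∘ₗ
    (LinearEquiv.ofBijective (coeLinearMap ℬ) h).symm.toLinearMap

variable (h : IsInternal ℬ)

theorem finsuppDecompose_of_mem {i : ι} {m : M} (hm : m ∈ ℬ i) :
    h.finsuppDecompose m = Finsupp.single i m := by
  have : (LinearEquiv.ofBijective (coeLinearMap ℬ) h).symm m = lof k ι (fun i => ℬ i) i ⟨m, hm⟩ :=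
    (LinearEquiv.symm_apply_eq _).mpr (coeLinearMap_of ℬ i ⟨m, hm⟩).symm
  simp [finsuppDecompose, this, toModule_lof]

theorem finsuppDecompose_apply_mem (m : M) (i : ι) : h.finsuppDecompose m i ∈ ℬ i := by
  induction m using h.induction_on with
  | mem j x hx =>
    rw [h.finsuppDecompose_of_mem hx, Finsupp.single_apply]
    split_ifs with hji
    · exact hji ▸ hx
    · exact zero_mem _
  | zero => simp
  | add x y hx hy => simpa using add_mem hx hy

theorem sum_finsuppDecompose (m : M) : (h.finsuppDecompose m).sum (fun _ x => x) = m := by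
  induction m using h.induction_on with
  | mem j x hx => simp [h.finsuppDecompose_of_mem hx]
  | zero => simp
  | add x y hx hy => rw [map_add, Finsupp.sum_add_index' (fun _ => rfl) fun _ _ _ => rfl, hx, hy]

end IsInternal

end DirectSum

section CoactionGrade

variable {k Λ M : Type*} [CommRing k] [AddCommGroup M] [Module k M]

def coactionGrade (ρ : M →ₗ[k] AddMonoidAlgebra k Λ ⊗[k] M) (χ : Λ) : Submodule k M where
  carrier := {m | ρ m = AddMonoidAlgebra.single χ 1 ⊗ₜ m}
  add_mem' {x y} hx hy := by simp_all [tmul_add]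
  zero_mem' := by simp
  smul_mem' c x hx := by simp_all [tmul_smul]

@[simp]
theorem mem_coactionGrade {ρ : M →ₗ[k] AddMonoidAlgebra k Λ ⊗[k] M} {χ : Λ} {m : M} :
    m ∈ coactionGrade ρ χ ↔ ρ m = AddMonoidAlgebra.single χ 1 ⊗ₜ m :=
  Iff.rfl

end CoactionGrade

section GroupAlgebraTensor

variable {k Λ M N : Type*} [CommRing k] [DecidableEq Λ]
  [AddCommGroup M] [Module k M] [AddCommGroup N] [Module k N]

variable (k Λ M) in
noncomputable def groupAlgTensorEquiv : AddMonoidAlgebra k Λ ⊗[k] M ≃ₗ[k] (Λ →₀ M) :=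
  TensorProduct.congr (AddMonoidAlgebra.coeffLinearEquiv k) (LinearEquiv.refl k M) ≪≫ₗ
    finsuppScalarLeft k M Λ

local notation "e" => groupAlgTensorEquiv k Λ

@[simp]
theorem groupAlgTensorEquiv_single_tmul (χ : Λ) (c : k) (m : M) :
    e M (AddMonoidAlgebra.single χ c ⊗ₜ m) = Finsupp.single χ (c • m) := by
  ext χ'
  simp [groupAlgTensorEquiv, finsuppScalarLeft_apply_tmul_apply, Finsupp.single_apply]

@[simp]
theorem groupAlgTensorEquiv_symm_single (χ : Λ) (m : M) :
    (e M).symm (Finsupp.single χ m) = AddMonoidAlgebra.single χ 1 ⊗ₜ m := by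
  simp [groupAlgTensorEquiv]

theorem groupAlgTensor_ext {f g : AddMonoidAlgebra k Λ ⊗[k] M →ₗ[k] N}
    (h : ∀ χ m, f (AddMonoidAlgebra.single χ 1 ⊗ₜ m) = g (AddMonoidAlgebra.single χ 1 ⊗ₜ m)) :
    f = g := by
  suffices f ∘ₗ (e M).symm.toLinearMap = g ∘ₗ (e M).symm.toLinearMap by
    simpa using congrArg (· ∘ₗ (e M).toLinearMap) this
  exact Finsupp.lhom_ext fun χ m => by simpa using h χ m

theorem groupAlgTensorEquiv_lTensor_apply (ρ : M →ₗ[k] N) (x : AddMonoidAlgebra k Λ ⊗[k] M)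
    (χ : Λ) : e N (LinearMap.lTensor _ ρ x) χ = ρ (e M x χ) := by
  have : Finsupp.lapply χ ∘ₗ (e N).toLinearMap ∘ₗ LinearMap.lTensor _ ρ =
      ρ ∘ₗ Finsupp.lapply χ ∘ₗ (e M).toLinearMap :=
    groupAlgTensor_ext fun χ' m => by simp [Finsupp.single_apply, apply_ite ρ]
  simpa using LinearMap.congr_fun this x

theorem mem_coactionGrade_iff_groupAlgTensorEquiv {ρ : M →ₗ[k] AddMonoidAlgebra k Λ ⊗[k] M}
    {χ : Λ} {m : M} : m ∈ coactionGrade ρ χ ↔ e M (ρ m) = Finsupp.single χ m := by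
  rw [← LinearEquiv.eq_symm_apply, groupAlgTensorEquiv_symm_single]
  rfl

noncomputable def gradingCoaction {ℬ : Λ → Submodule k M} (h : DirectSum.IsInternal ℬ) :
    M →ₗ[k] AddMonoidAlgebra k Λ ⊗[k] M :=
  (e M).symm.toLinearMap ∘ₗ h.finsuppDecompose

variable {ℬ : Λ → Submodule k M} (h : DirectSum.IsInternal ℬ)

@[simp]
theorem groupAlgTensorEquiv_gradingCoaction (m : M) :
    e M (gradingCoaction h m) = h.finsuppDecompose m :=
  (e M).apply_symm_apply _

theorem gradingCoaction_of_mem {χ : Λ} {m : M} (hm : m ∈ ℬ χ) :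
    gradingCoaction h m = AddMonoidAlgebra.single χ 1 ⊗ₜ m := by
  simp [gradingCoaction, h.finsuppDecompose_of_mem hm]

theorem coactionGrade_gradingCoaction : coactionGrade (gradingCoaction h) = ℬ := by
  ext χ m
  refine ⟨fun hm => ?_, gradingCoaction_of_mem h⟩
  have hdecomp : h.finsuppDecompose m = Finsupp.single χ m := by
    simpa using mem_coactionGrade_iff_groupAlgTensorEquiv.mp hm
  simpa [hdecomp] using h.finsuppDecompose_apply_mem m χ

end GroupAlgebraTensor

section GroupAlgebraStructure

variable {k Λ : Type*} [CommRing k] [AddCommGroup Λ]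

@[simp]
theorem groupAlgCounit_single (χ : Λ) (c : k) :
    groupAlgCounit k Λ (AddMonoidAlgebra.single χ c) = c := by
  simp [groupAlgCounit]

@[simp]
theorem groupAlgComul_single (χ : Λ) :
    groupAlgComul k Λ (AddMonoidAlgebra.single χ 1) =
      AddMonoidAlgebra.single χ 1 ⊗ₜ AddMonoidAlgebra.single χ 1 := by
  simp [groupAlgComul, groupAlgDiagHom]

end GroupAlgebraStructure

section Coaction

variable {k Λ M : Type*} [CommRing k] [AddCommGroup Λ] [DecidableEq Λ]
  [AddCommGroup M] [Module k M]

local notation "e" => groupAlgTensorEquiv k Λ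

theorem lid_rTensor_groupAlgCounit (x : AddMonoidAlgebra k Λ ⊗[k] M) :
    TensorProduct.lid k M (LinearMap.rTensor M (groupAlgCounit k Λ).toLinearMap x) =
      (e M x).sum fun _ m => m := by
  have : TensorProduct.lid k M ∘ₗ LinearMap.rTensor M (groupAlgCounit k Λ).toLinearMap =
      Finsupp.lsum k (fun _ => LinearMap.id) ∘ₗ (e M).toLinearMap :=
    groupAlgTensor_ext fun χ m => by simp
  exact LinearMap.congr_fun this x

theorem groupAlgTensorEquiv_assoc_rTensor_groupAlgComul_apply (x : AddMonoidAlgebra k Λ ⊗[k] M)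
    (χ : Λ) :
    e _ (TensorProduct.assoc k _ _ M (LinearMap.rTensor M (groupAlgComul k Λ).toLinearMap x)) χ =
      AddMonoidAlgebra.single χ 1 ⊗ₜ e M x χ := by
  have : Finsupp.lapply χ ∘ₗ (e _).toLinearMap ∘ₗ (TensorProduct.assoc k _ _ M).toLinearMap ∘ₗ
        LinearMap.rTensor M (groupAlgComul k Λ).toLinearMap =
      TensorProduct.mk k _ M (AddMonoidAlgebra.single χ 1) ∘ₗ Finsupp.lapply χ ∘ₗ
        (e M).toLinearMap :=
    groupAlgTensor_ext fun χ' m => by by_cases hχ : χ' = χ <;> simp [hχ]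
  simpa using LinearMap.congr_fun this x

variable (k Λ) in
/-- For `ρ = μ.toLinearMap` with `μ` an algebra map, this unfolds to the same laws written with
`Algebra.TensorProduct.map`, `Algebra.TensorProduct.lid` and `Algebra.TensorProduct.assoc`. -/
def IsGroupAlgCoaction (ρ : M →ₗ[k] AddMonoidAlgebra k Λ ⊗[k] M) : Prop :=
  (∀ m, TensorProduct.lid k M (LinearMap.rTensor M (groupAlgCounit k Λ).toLinearMap (ρ m)) = m) ∧
  ∀ m, LinearMap.lTensor _ ρ (ρ m) =
    TensorProduct.assoc k _ _ M (LinearMap.rTensor M (groupAlgComul k Λ).toLinearMap (ρ m))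

theorem isGroupAlgCoaction_iff (ρ : M →ₗ[k] AddMonoidAlgebra k Λ ⊗[k] M) :
    IsGroupAlgCoaction k Λ ρ ↔ (∀ m, (e M (ρ m)).sum (fun _ x => x) = m) ∧
      ∀ m χ, ρ (e M (ρ m) χ) = AddMonoidAlgebra.single χ 1 ⊗ₜ e M (ρ m) χ := by
  refine and_congr (forall_congr' fun m => by rw [lid_rTensor_groupAlgCounit])
    (forall_congr' fun m => ?_)
  rw [← (e _).injective.eq_iff, Finsupp.ext_iff]
  simp only [groupAlgTensorEquiv_lTensor_apply,
    groupAlgTensorEquiv_assoc_rTensor_groupAlgComul_apply]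

theorem isInternal_coactionGrade {ρ : M →ₗ[k] AddMonoidAlgebra k Λ ⊗[k] M}
    (hρ : IsGroupAlgCoaction k Λ ρ) : DirectSum.IsInternal (coactionGrade ρ) := by
  rw [isGroupAlgCoaction_iff] at hρ
  exact DirectSum.isInternal_submodule_of_finsupp_decomposition ((e M).toLinearMap ∘ₗ ρ) hρ.2
    hρ.1 fun χ m hm => mem_coactionGrade_iff_groupAlgTensorEquiv.mp hm

theorem isGroupAlgCoaction_gradingCoaction {ℬ : Λ → Submodule k M} (h : DirectSum.IsInternal ℬ) :
    IsGroupAlgCoaction k Λ (gradingCoaction h) := by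
  rw [isGroupAlgCoaction_iff]
  simp only [groupAlgTensorEquiv_gradingCoaction]
  exact ⟨h.sum_finsuppDecompose,
    fun m χ => gradingCoaction_of_mem h (h.finsuppDecompose_apply_mem m χ)⟩

theorem gradingCoaction_coactionGrade {ρ : M →ₗ[k] AddMonoidAlgebra k Λ ⊗[k] M}
    (hρ : IsGroupAlgCoaction k Λ ρ) : gradingCoaction (isInternal_coactionGrade hρ) = ρ :=
  (isInternal_coactionGrade hρ).linearMap_ext fun _ _ hm =>
    (gradingCoaction_of_mem _ hm).trans hm.symm

end Coaction

section Algebra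

variable {k Λ R : Type*} [CommRing k] [AddCommGroup Λ] [Ring R] [Algebra k R]

instance gradedMonoid_coactionGrade (μ : R →ₐ[k] AddMonoidAlgebra k Λ ⊗[k] R) :
    SetLike.GradedMonoid (coactionGrade μ.toLinearMap) where
  one_mem := by simp [Algebra.TensorProduct.one_def, AddMonoidAlgebra.one_def]
  mul_mem _ _ _ _ hx hy := by
    simp_all [Algebra.TensorProduct.tmul_mul_tmul, AddMonoidAlgebra.single_mul_single]

variable [DecidableEq Λ] {ℬ : Λ → Submodule k R} [SetLike.GradedMonoid ℬ]

noncomputable def gradingCoactionAlgHom (h : DirectSum.IsInternal ℬ) :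
    R →ₐ[k] AddMonoidAlgebra k Λ ⊗[k] R :=
  AlgHom.ofLinearMap (gradingCoaction h)
    (by rw [gradingCoaction_of_mem h SetLike.GradedOne.one_mem, Algebra.TensorProduct.one_def,
      AddMonoidAlgebra.one_def])
    fun x y => by
      induction x using h.induction_on with
      | zero => simp
      | add x x' hx hx' => simp [add_mul, hx, hx']
      | mem χ x hx =>
        induction y using h.induction_on with
        | zero => simp
        | add y y' hy hy' => simp [mul_add, hy, hy']
        | mem χ' y hy =>
          rw [gradingCoaction_of_mem h (SetLike.mul_mem_graded hx hy), gradingCoaction_of_mem h hx,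
            gradingCoaction_of_mem h hy, Algebra.TensorProduct.tmul_mul_tmul,
            AddMonoidAlgebra.single_mul_single, one_mul]

end Algebra

theorem statement5_general (k : Type*) [Field k] (Λ : Type*) [AddCommGroup Λ]
    [DecidableEq Λ] (R : Type*) [CommRing R] [Algebra k R] :
    ∃ e :
      {μ : R →ₐ[k] (AddMonoidAlgebra k Λ ⊗[k] R) //
        (∀ f : R,
          (Algebra.TensorProduct.lid k R)
            ((Algebra.TensorProduct.map (groupAlgCounit k Λ) (AlgHom.id k R)) (μ f)) = f) ∧
        (∀ f : R,
          (Algebra.TensorProduct.map (AlgHom.id k (AddMonoidAlgebra k Λ)) μ) (μ f) =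
            (Algebra.TensorProduct.assoc k k k (AddMonoidAlgebra k Λ) (AddMonoidAlgebra k Λ) R)
              ((Algebra.TensorProduct.map (groupAlgComul k Λ) (AlgHom.id k R)) (μ f)))} ≃
      {ℬ : Λ → Submodule k R //
        DirectSum.IsInternal ℬ ∧ (1 : R) ∈ ℬ 0 ∧
        ∀ (χ χ' : Λ) (x y : R), x ∈ ℬ χ → y ∈ ℬ χ' → x * y ∈ ℬ (χ + χ')},
      ∀ μ (χ : Λ),
        ((e μ).1 χ : Set R) =
          {f : R | μ.1 f = AddMonoidAlgebra.single χ (1 : k) ⊗ₜ[k] f} := by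
  refine ⟨
    { toFun μ := ⟨coactionGrade μ.1.toLinearMap,
        isInternal_coactionGrade (ρ := μ.1.toLinearMap) μ.2,
        SetLike.GradedOne.one_mem, fun _ _ _ _ hx hy => SetLike.mul_mem_graded hx hy⟩
      invFun ℬ :=
        letI : SetLike.GradedMonoid ℬ.1 :=
          { one_mem := ℬ.2.2.1, mul_mem := fun _ _ _ _ => ℬ.2.2.2 _ _ _ _ }
        ⟨gradingCoactionAlgHom ℬ.2.1, isGroupAlgCoaction_gradingCoaction ℬ.2.1⟩
      left_inv μ := Subtype.ext <| AlgHom.toLinearMap_injective <|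
        gradingCoaction_coactionGrade (ρ := μ.1.toLinearMap) μ.2
      right_inv ℬ := Subtype.ext <| coactionGrade_gradingCoaction ℬ.2.1 },
    fun _ _ => rfl⟩

/-- Coactions of the group algebra `k[Λ]` on a commutative `k`-algebra `R` (i.e. `k`-algebra
homomorphisms `μ : R → k[Λ] ⊗ R` satisfying the counit and coassociativity laws) are in
bijection with `Λ`-gradings of `R`; under the bijection the graded piece of degree `χ` is
`{f ∈ R : μ(f) = λ_χ ⊗ f}`. -/
theorem statement5 (k : Type*) [Field k] (Λ : Type*) [AddCommGroup Λ] [AddGroup.FG Λ]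
    [DecidableEq Λ] (R : Type*) [CommRing R] [Algebra k R] :
    ∃ e :
      {μ : R →ₐ[k] (AddMonoidAlgebra k Λ ⊗[k] R) //
        (∀ f : R,
          (Algebra.TensorProduct.lid k R)
            ((Algebra.TensorProduct.map (groupAlgCounit k Λ) (AlgHom.id k R)) (μ f)) = f) ∧
        (∀ f : R,
          (Algebra.TensorProduct.map (AlgHom.id k (AddMonoidAlgebra k Λ)) μ) (μ f) =
            (Algebra.TensorProduct.assoc k k k (AddMonoidAlgebra k Λ) (AddMonoidAlgebra k Λ) R)
              ((Algebra.TensorProduct.map (groupAlgComul k Λ) (AlgHom.id k R)) (μ f)))} ≃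
      {ℬ : Λ → Submodule k R //
        DirectSum.IsInternal ℬ ∧ (1 : R) ∈ ℬ 0 ∧
        ∀ (χ χ' : Λ) (x y : R), x ∈ ℬ χ → y ∈ ℬ χ' → x * y ∈ ℬ (χ + χ')},
      ∀ μ (χ : Λ),
        ((e μ).1 χ : Set R) =
          {f : R | μ.1 f = AddMonoidAlgebra.single χ (1 : k) ⊗ₜ[k] f} :=
  statement5_general k Λ R
end

section
/- Let k be a field, Λ a finitely generated abelian group, and R a commutative k-algebra of finite type equipped with a Λ-grading R = ⊕_{χ∈Λ} R_χ. Then for any fixed χ ∈ Λ, the k-submodule ⊕_{j∈ℕ} R_{jχ} (the span of the homogeneous components of degrees jχ for j ≥ 0) is a k-subalgebra of R and is a finitely generated k-algebra. -/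
/-!
`R` is generated by finitely many homogeneous elements `xᵢ ∈ R_{dᵢ}`, so the monomials `x^a` span
`R` and each lies in `R_{∑ aᵢ dᵢ}`; projecting to a component, `R_{jχ}` is spanned by the monomials
with `∑ aᵢ dᵢ = jχ`. The exponents `(a, j)` of these form the submonoid of `ℕ^ι × ℕ` on which two
additive maps to `Λ` agree, which is finitely generated by Gordan's lemma; the monomials of a finite
generating set then generate the algebra of semi-invariants.
-/

open DirectSum

section

variable {k R Λ ι : Type*} [CommSemiring k] [CommSemiring R] [Algebra k R] [AddCommMonoid Λ]

section SemiInvariants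

variable (ℬ : Λ → Submodule k R) [SetLike.GradedMonoid ℬ]

theorem iSup_nsmul_mul_le (χ : Λ) :
    (⨆ j : ℕ, ℬ (j • χ)) * (⨆ j : ℕ, ℬ (j • χ)) ≤ ⨆ j : ℕ, ℬ (j • χ) := by
  simp only [Submodule.iSup_mul, Submodule.mul_iSup, iSup_le_iff, Submodule.mul_le]
  intro j i x hx y hy
  exact Submodule.mem_iSup_of_mem (i + j) (add_nsmul χ i j ▸ SetLike.mul_mem_graded hx hy)

def semiInvariants (χ : Λ) : Subalgebra k R :=
  (⨆ j : ℕ, ℬ (j • χ)).toSubalgebra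
    (Submodule.mem_iSup_of_mem 0 (by simpa using SetLike.GradedOne.one_mem))
    fun _ _ hx hy => iSup_nsmul_mul_le ℬ χ (Submodule.mul_mem_mul hx hy)

theorem toSubmodule_semiInvariants (χ : Λ) :
    Subalgebra.toSubmodule (semiInvariants ℬ χ) = ⨆ j : ℕ, ℬ (j • χ) :=
  Submodule.toSubalgebra_toSubmodule ..

theorem mem_semiInvariants {χ : Λ} {r : R} : r ∈ semiInvariants ℬ χ ↔ r ∈ ⨆ j : ℕ, ℬ (j • χ) :=
  Iff.rfl

end SemiInvariants

section Monomials

variable [Fintype ι] (x : ι → R)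

def monomialOf (a : ι → ℕ) : R := ∏ i, x i ^ a i

theorem monomialOf_add (a b : ι → ℕ) :
    monomialOf x (a + b) = monomialOf x a * monomialOf x b := by
  simp only [monomialOf, Pi.add_apply, pow_add, Finset.prod_mul_distrib]

theorem span_range_monomialOf (hx : Algebra.adjoin k (Set.range x) = ⊤) :
    Submodule.span k (Set.range (monomialOf x)) = ⊤ := by
  rw [← Algebra.top_toSubmodule, ← hx, Algebra.adjoin_eq_span]
  congr 1
  ext r
  simp [Submonoid.mem_closure_range_iff_of_fintype, monomialOf, eq_comm]

theorem monomialOf_fst_mem_adjoin_of_mem_closure {G : Set ((ι → ℕ) × ℕ)} {p : (ι → ℕ) × ℕ}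
    (hp : p ∈ AddSubmonoid.closure G) :
    monomialOf x p.1 ∈ Algebra.adjoin k ((fun q => monomialOf x q.1) '' G) := by
  induction hp using AddSubmonoid.closure_induction with
  | mem q hq => exact Algebra.subset_adjoin ⟨q, hq, rfl⟩
  | zero => simp [monomialOf]
  | add p q _ _ hp hq => simpa only [Prod.fst_add, monomialOf_add] using mul_mem hp hq

end Monomials

section Exponents

variable [Fintype ι]

def exponentDegree (deg : ι → Λ) : (ι → ℕ) →+ Λ :=
  (Fintype.linearCombination ℕ deg).toAddMonoidHom

def semiInvariantExponents (deg : ι → Λ) (χ : Λ) : AddSubmonoid ((ι → ℕ) × ℕ) :=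
  ((exponentDegree deg).comp (AddMonoidHom.fst _ _)).eqLocusM
    ((multiplesHom Λ χ).comp (AddMonoidHom.snd _ _))

theorem mem_semiInvariantExponents {deg : ι → Λ} {χ : Λ} {p : (ι → ℕ) × ℕ} :
    p ∈ semiInvariantExponents deg χ ↔ exponentDegree deg p.1 = p.2 • χ :=
  Iff.rfl

theorem semiInvariantExponents_fg [IsCancelAdd Λ] (deg : ι → Λ) (χ : Λ) :
    (semiInvariantExponents deg χ).FG :=
  AddSubmonoid.fg_eqLocusM _ _

end Exponents

section Graded

variable [DecidableEq Λ] (ℬ : Λ → Submodule k R) [GradedAlgebra ℬ]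

theorem exists_finset_isHomogeneousElem_adjoin_eq_top (h : Algebra.FiniteType k R) :
    ∃ s : Finset R, (∀ x ∈ s, SetLike.IsHomogeneousElem ℬ x) ∧
      Algebra.adjoin k (s : Set R) = ⊤ := by
  classical
  obtain ⟨s, hs⟩ := h.out
  refine ⟨s.biUnion fun y => (decompose ℬ y).support.image fun i => (decompose ℬ y i : R),
    ?_, eq_top_iff.2 (hs ▸ Algebra.adjoin_le fun y hy => ?_)⟩
  · simp only [Finset.mem_biUnion, Finset.mem_image]
    rintro _ ⟨y, -, i, -, rfl⟩
    exact ⟨i, Submodule.coe_mem _⟩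
  · rw [← sum_support_decompose ℬ y]
    refine Subalgebra.sum_mem _ fun i hi => Algebra.subset_adjoin ?_
    simp only [Finset.coe_biUnion, Finset.coe_image, Set.mem_iUnion, Set.mem_image]
    exact ⟨y, hy, i, hi, rfl⟩

theorem le_span_inter_of_span_eq_top {S : Set R} (hS : ∀ s ∈ S, SetLike.IsHomogeneousElem ℬ s)
    (hspan : Submodule.span k S = ⊤) (μ : Λ) : ℬ μ ≤ Submodule.span k (S ∩ ℬ μ) := by
  intro r hr
  have hr' : r ∈ (Submodule.span k S).map (GradedAlgebra.proj ℬ μ) :=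
    ⟨r, hspan ▸ Submodule.mem_top, by simp [GradedAlgebra.proj_apply, decompose_of_mem_same ℬ hr]⟩
  rw [Submodule.map_span] at hr'
  refine Submodule.span_le.2 ?_ hr'
  rintro _ ⟨s, hs, rfl⟩
  obtain ⟨i, hi⟩ := hS s hs
  by_cases hiμ : i = μ
  · subst hiμ
    rw [GradedAlgebra.proj_apply, decompose_of_mem_same ℬ hi]
    exact Submodule.subset_span ⟨hs, hi⟩
  · rw [GradedAlgebra.proj_apply, decompose_of_mem_ne ℬ hi hiμ]
    exact zero_mem _

variable [Fintype ι] {x : ι → R} {deg : ι → Λ}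

theorem monomialOf_mem (hx : ∀ i, x i ∈ ℬ (deg i)) (a : ι → ℕ) :
    monomialOf x a ∈ ℬ (exponentDegree deg a) := by
  simpa [monomialOf, exponentDegree, Fintype.linearCombination_apply] using
    SetLike.prod_pow_mem_graded ℬ deg x a (F := Finset.univ) fun i _ => hx i

theorem semiInvariants_eq_adjoin (hx : ∀ i, x i ∈ ℬ (deg i))
    (htop : Algebra.adjoin k (Set.range x) = ⊤) (χ : Λ)
    {G : Set ((ι → ℕ) × ℕ)} (hG : AddSubmonoid.closure G = semiInvariantExponents deg χ) :
    semiInvariants ℬ χ = Algebra.adjoin k ((fun p => monomialOf x p.1) '' G) := by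
  refine le_antisymm ?_ (Algebra.adjoin_le ?_)
  · rw [← Subalgebra.toSubmodule.le_iff_le, toSubmodule_semiInvariants]
    refine iSup_le fun j =>
      (le_span_inter_of_span_eq_top ℬ ?_ (span_range_monomialOf x htop) _).trans
        (Submodule.span_le.2 ?_)
    · rintro _ ⟨a, rfl⟩
      exact ⟨_, monomialOf_mem ℬ hx a⟩
    · rintro _ ⟨⟨a, rfl⟩, ha⟩
      by_cases h0 : monomialOf x a = 0
      · simp [h0]
      have hdeg := degree_eq_of_mem_mem ℬ (monomialOf_mem ℬ hx a) ha h0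
      exact monomialOf_fst_mem_adjoin_of_mem_closure (p := (a, j)) x (hG ▸ hdeg)
  · rintro _ ⟨p, hp, rfl⟩
    have hpN : p ∈ semiInvariantExponents deg χ := hG ▸ AddSubmonoid.subset_closure hp
    exact (mem_semiInvariants ℬ).2 <|
      Submodule.mem_iSup_of_mem p.2 (mem_semiInvariantExponents.1 hpN ▸ monomialOf_mem ℬ hx p.1)

end Graded

end

theorem statement6_general (k : Type*) [Field k] (Λ : Type*) [AddCommGroup Λ]
    [DecidableEq Λ] (R : Type*) [CommRing R] [Algebra k R]
    (hfg : Algebra.FiniteType k R)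
    (ℬ : Λ → Submodule k R) (hdirect : DirectSum.IsInternal ℬ)
    (hone : (1 : R) ∈ ℬ 0)
    (hmul : ∀ (χ χ' : Λ) (x y : R), x ∈ ℬ χ → y ∈ ℬ χ' → x * y ∈ ℬ (χ + χ'))
    (χ : Λ) :
    ∃ A : Subalgebra k R,
      Subalgebra.toSubmodule A = (⨆ j : ℕ, ℬ (j • χ)) ∧ Algebra.FiniteType k A := by
  classical
  let _ : GradedAlgebra ℬ :=
    { hdirect.chooseDecomposition with
      one_mem := hone
      mul_mem := fun χ χ' x y => hmul χ χ' x y }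
  obtain ⟨s, hs_hom, hs_top⟩ := exists_finset_isHomogeneousElem_adjoin_eq_top ℬ hfg
  choose deg hdeg using fun i : s => hs_hom i i.2
  obtain ⟨G, hG⟩ := semiInvariantExponents_fg deg χ
  refine ⟨semiInvariants ℬ χ, toSubmodule_semiInvariants ℬ χ, ?_⟩
  rw [← Subalgebra.fg_iff_finiteType, semiInvariants_eq_adjoin ℬ hdeg (by simpa using hs_top) χ hG,
    ← Finset.coe_image]
  exact Subalgebra.fg_adjoin_finset _

/-- Let `R` be a finitely generated commutative algebra over a field `k`, graded by a finitely
generated abelian group `Λ`.  For any fixed `χ ∈ Λ`, the `k`-submodule `⊕_{j∈ℕ} R_{jχ}` is a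
`k`-subalgebra of `R` and is a finitely generated `k`-algebra. -/
theorem statement6 (k : Type*) [Field k] (Λ : Type*) [AddCommGroup Λ] [AddGroup.FG Λ]
    [DecidableEq Λ] (R : Type*) [CommRing R] [Algebra k R]
    (hfg : Algebra.FiniteType k R)
    (ℬ : Λ → Submodule k R) (hdirect : DirectSum.IsInternal ℬ)
    (hone : (1 : R) ∈ ℬ 0)
    (hmul : ∀ (χ χ' : Λ) (x y : R), x ∈ ℬ χ → y ∈ ℬ χ' → x * y ∈ ℬ (χ + χ'))
    (χ : Λ) :
    ∃ A : Subalgebra k R,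
      Subalgebra.toSubmodule A = (⨆ j : ℕ, ℬ (j • χ)) ∧ Algebra.FiniteType k A :=
  statement6_general k Λ R hfg ℬ hdirect hone hmul χ
end

section
/- Let k be a field, Λ a finitely generated abelian group, and R a commutative k-algebra of finite type equipped with a Λ-grading R = ⊕_{χ∈Λ} R_χ. Then the degree-zero component R₀ is a finitely generated k-algebra. -/
/-!
Choose finitely many homogeneous generators `x i ∈ ℬ (deg i)` of `R`. Since the projection onto
`ℬ 0` is `k`-linear and maps each monomial `x ^ d` either to itself or to `0`, `ℬ 0` is spanned by
the monomials of weight `∑ dᵢ • deg i = 0`. Their exponents form the kernel of the weight map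
`ℕ^ι → Λ`, a submonoid closed under subtraction, which is finitely generated by Dickson's lemma
(Gordan's lemma). Hence `ℬ 0` is the image of the monoid algebra of a finitely generated monoid.
-/

open MvPolynomial

theorem AddMonoidHom.mker_fg {M N : Type*} [AddCommMonoid M] [PartialOrder M]
    [WellQuasiOrderedLE M] [IsOrderedCancelAddMonoid M] [CanonicallyOrderedAdd M]
    [AddZeroClass N] (f : M →+ N) : (AddMonoidHom.mker f).FG :=
  AddSubmonoid.fg_of_subtractive fun x hx y hxy => by
    rwa [AddMonoidHom.mem_mker, map_add, hx, zero_add] at hxy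

instance AddMonoidHom.addMonoidFG_mker {M N : Type*} [AddCommMonoid M] [PartialOrder M]
    [WellQuasiOrderedLE M] [IsOrderedCancelAddMonoid M] [CanonicallyOrderedAdd M]
    [AddZeroClass N] (f : M →+ N) : AddMonoid.FG (AddMonoidHom.mker f) :=
  (AddMonoid.fg_iff_addSubmonoid_fg _).mpr f.mker_fg

namespace MvPolynomial

variable {ι k R Λ : Type*} [CommRing k] [CommRing R] [Algebra k R] [AddCommMonoid Λ]

noncomputable def aevalWeightZero (x : ι → R) (deg : ι → Λ) :
    AddMonoidAlgebra k (AddMonoidHom.mker (Finsupp.weight deg : (ι →₀ ℕ) →+ Λ)) →ₐ[k] R :=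
  (aeval x).comp (AddMonoidAlgebra.mapDomainAlgHom k k (AddMonoidHom.mker _).subtype)

theorem aevalWeightZero_single {x : ι → R} {deg : ι → Λ}
    (d : AddMonoidHom.mker (Finsupp.weight deg : (ι →₀ ℕ) →+ Λ)) (c : k) :
    aevalWeightZero x deg (AddMonoidAlgebra.single d c) = aeval x (monomial d.1 c) := by
  simp [aevalWeightZero, single_eq_monomial]

end MvPolynomial

namespace GradedAlgebra

variable {ι k R Λ : Type*} [CommRing k] [CommRing R] [Algebra k R]
  [AddCommMonoid Λ] [DecidableEq Λ] (ℬ : Λ → Submodule k R) [GradedAlgebra ℬ]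

theorem exists_finset_isHomogeneousElem_adjoin_eq_top [Algebra.FiniteType k R] :
    ∃ s : Finset R, (∀ r ∈ s, SetLike.IsHomogeneousElem ℬ r) ∧
      Algebra.adjoin k (s : Set R) = ⊤ := by
  classical
  obtain ⟨t, ht⟩ := Algebra.FiniteType.out (R := k) (A := R)
  refine ⟨t.biUnion fun r => (DirectSum.decompose ℬ r).support.image
      fun i => (DirectSum.decompose ℬ r i : R), ?_, ?_⟩
  · simp only [Finset.mem_biUnion, Finset.mem_image]
    rintro _ ⟨r, -, i, -, rfl⟩
    exact ⟨i, (DirectSum.decompose ℬ r i).2⟩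
  · rw [← top_le_iff, ← ht, Algebra.adjoin_le_iff]
    intro r hr
    rw [← DirectSum.sum_support_decompose ℬ r]
    exact sum_mem fun i hi => Algebra.subset_adjoin <| by
      rw [Finset.mem_coe, Finset.mem_biUnion]
      exact ⟨r, hr, Finset.mem_image_of_mem _ hi⟩

variable {ℬ} {x : ι → R} {deg : ι → Λ}

theorem aeval_monomial_mem (hx : ∀ i, x i ∈ ℬ (deg i)) (d : ι →₀ ℕ) (c : k) :
    aeval x (monomial d c) ∈ ℬ (Finsupp.weight deg d) := by
  rw [aeval_monomial, ← Algebra.smul_def, Finsupp.weight_apply]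
  exact Submodule.smul_mem _ c (SetLike.prod_pow_mem_graded ℬ deg x d fun i _ => hx i)

theorem toSubmodule_range_aevalWeightZero (hx : ∀ i, x i ∈ ℬ (deg i))
    (hgen : Algebra.adjoin k (Set.range x) = ⊤) :
    Subalgebra.toSubmodule (aevalWeightZero x deg).range = ℬ 0 := by
  apply le_antisymm
  · rintro _ ⟨f, rfl⟩
    change aevalWeightZero x deg f ∈ ℬ 0
    induction f using AddMonoidAlgebra.induction_linear with
    | zero => simp
    | add f g hf hg => simpa using add_mem hf hg
    | single d c =>
      rw [aevalWeightZero_single]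
      exact d.2 ▸ aeval_monomial_mem hx d c
  · intro r hr
    obtain ⟨p, rfl⟩ := (AlgHom.range_eq_top (aeval (R := k) x)).mp
      (by rw [← Algebra.adjoin_range_eq_range_aeval, hgen]) r
    rw [← DirectSum.decompose_of_mem_same ℬ hr, ← GradedAlgebra.proj_apply, p.as_sum, map_sum,
      map_sum]
    refine sum_mem fun d _ => ?_
    have hd := aeval_monomial_mem hx d (coeff d p)
    rw [GradedAlgebra.proj_apply]
    by_cases hd0 : Finsupp.weight deg d = 0
    · rw [DirectSum.decompose_of_mem_same ℬ (hd0 ▸ hd), ← aevalWeightZero_single (d := ⟨d, hd0⟩)]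
      exact AlgHom.mem_range_self _ _
    · rw [DirectSum.decompose_of_mem_ne ℬ hd hd0]
      exact zero_mem _

variable (ℬ) in
theorem exists_finiteType_subalgebra_toSubmodule_eq_zero [Algebra.FiniteType k R] :
    ∃ A : Subalgebra k R, Subalgebra.toSubmodule A = ℬ 0 ∧ Algebra.FiniteType k A := by
  obtain ⟨s, hhom, hs⟩ := exists_finset_isHomogeneousElem_adjoin_eq_top ℬ
  choose deg hdeg using hhom
  let φ := aevalWeightZero (k := k) ((↑) : s → R) fun r => deg r r.2
  refine ⟨φ.range, toSubmodule_range_aevalWeightZero (fun r => hdeg r r.2)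
    (by rwa [Subtype.range_coe]), ?_⟩
  exact .of_surjective φ.rangeRestrict φ.rangeRestrict_surjective

end GradedAlgebra

theorem statement7_general (k : Type*) [Field k] (Λ : Type*) [AddCommGroup Λ]
    [DecidableEq Λ] (R : Type*) [CommRing R] [Algebra k R]
    (hfg : Algebra.FiniteType k R)
    (ℬ : Λ → Submodule k R) (hdirect : DirectSum.IsInternal ℬ)
    (hone : (1 : R) ∈ ℬ 0)
    (hmul : ∀ (χ χ' : Λ) (x y : R), x ∈ ℬ χ → y ∈ ℬ χ' → x * y ∈ ℬ (χ + χ')) :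
    ∃ A : Subalgebra k R,
      Subalgebra.toSubmodule A = ℬ 0 ∧ Algebra.FiniteType k A := by
  let _ : GradedAlgebra ℬ :=
    { hdirect.chooseDecomposition with
      one_mem := hone
      mul_mem := fun _ _ _ _ hx hy => hmul _ _ _ _ hx hy }
  exact GradedAlgebra.exists_finiteType_subalgebra_toSubmodule_eq_zero ℬ

/-- Let `R` be a finitely generated commutative algebra over a field `k`, graded by a finitely
generated abelian group `Λ`.  Then the degree-zero component `R₀` is a `k`-subalgebra of `R`
and is a finitely generated `k`-algebra. -/
theorem statement7 (k : Type*) [Field k] (Λ : Type*) [AddCommGroup Λ] [AddGroup.FG Λ]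
    [DecidableEq Λ] (R : Type*) [CommRing R] [Algebra k R]
    (hfg : Algebra.FiniteType k R)
    (ℬ : Λ → Submodule k R) (hdirect : DirectSum.IsInternal ℬ)
    (hone : (1 : R) ∈ ℬ 0)
    (hmul : ∀ (χ χ' : Λ) (x y : R), x ∈ ℬ χ → y ∈ ℬ χ' → x * y ∈ ℬ (χ + χ')) :
    ∃ A : Subalgebra k R,
      Subalgebra.toSubmodule A = ℬ 0 ∧ Algebra.FiniteType k A :=
  statement7_general k Λ R hfg ℬ hdirect hone hmul
end

section
/- Let k be a field and π : ℤⁿ → ℤ^d a group homomorphism. Let ψ : k[x₁,…,xₙ] → k[ℤ^d] be the k-algebra homomorphism to the monoid algebra of ℤ^d (Laurent polynomials in d variables) sending xᵢ to the monomial t^{π(eᵢ)}, where e₁,…,eₙ is the standard basis of ℤⁿ. Then the kernel of ψ equals the ideal of k[x₁,…,xₙ] generated by the binomials x^u − x^v for u, v ∈ ℕⁿ with π(u) = π(v), and this kernel is a prime ideal. -/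
/-- The `k`-algebra homomorphism `ψ : k[x₁,…,xₙ] → k[ℤ^d]` sending `xᵢ` to the (Laurent)
monomial `t^{π(eᵢ)}` associated to a lattice map `π : ℤⁿ → ℤ^d`. -/
noncomputable def toricCharMap (k : Type*) [Field k] (n d : ℕ)
    (π : (Fin n → ℤ) →+ (Fin d → ℤ)) :
    MvPolynomial (Fin n) k →ₐ[k] AddMonoidAlgebra k (Fin d → ℤ) :=
  MvPolynomial.aeval fun i => AddMonoidAlgebra.single (π (Pi.single i 1)) (1 : k)

/-!
For an additive monoid hom `f : M →+ N`, the kernel of `mapDomain f : R[M] → R[N]` is spanned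
by the binomials `t^a - t^b` with `f a = f b`: if `g` is a section of `f` on its image, every `x`
differs from `mapDomain (g ∘ f) x = mapDomain g (mapDomain f x)` by a combination of such
binomials, and the latter vanishes for `x` in the kernel. The map `ψ` is `mapDomain` along
`u ↦ π(u)`, and its kernel is prime because `k[ℤ^d]` is a domain.
-/

open AddMonoidAlgebra

namespace AddMonoidAlgebra

variable {R M N : Type*}

theorem mapDomain_comp [Semiring R] {O : Type*} (f : M → N) (g : N → O) (x : R[M]) :
    mapDomain (g ∘ f) x = mapDomain g (mapDomain f x) := by
  ext; simp [mapDomain, Finsupp.mapDomain_comp]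

variable [Ring R] [AddMonoid M]

noncomputable def binomialIdeal (f : M → N) : Ideal R[M] :=
  Ideal.span {x | ∃ a b, f a = f b ∧ x = single a 1 - single b 1}

theorem sub_mapDomain_mem_binomialIdeal {f : M → N} {g : M → M} (hg : ∀ a, f (g a) = f a)
    (x : R[M]) : x - mapDomain g x ∈ binomialIdeal (R := R) f := by
  induction x using induction_linear with
  | zero => simp
  | add x y hx hy =>
    rw [mapDomain_add, add_sub_add_comm]
    exact add_mem hx hy
  | single a r =>
    have hmem : single a 1 - single (g a) 1 ∈ binomialIdeal (R := R) f :=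
      Ideal.subset_span ⟨a, g a, (hg a).symm, rfl⟩
    have : single a r - single (g a) r = single 0 r * (single a 1 - single (g a) 1) := by
      simp [mul_sub, single_mul_single]
    rw [mapDomain_single, this]
    exact Ideal.mul_mem_left _ _ hmem

theorem ker_mapDomainRingHom [AddMonoid N] (f : M →+ N) :
    RingHom.ker (mapDomainRingHom R f) = binomialIdeal f := by
  apply le_antisymm
  · intro x hx
    have hsec : ∀ a, f (Function.invFun f (f a)) = f a := fun a => Function.invFun_eq ⟨a, rfl⟩
    have hzero : mapDomain (Function.invFun f ∘ f) x = 0 := by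
      rw [mapDomain_comp, show mapDomain f x = 0 from hx, mapDomain_zero]
    simpa [hzero] using
      sub_mapDomain_mem_binomialIdeal (R := R) (g := Function.invFun f ∘ f) hsec x
  · rw [binomialIdeal, Ideal.span_le]
    rintro _ ⟨a, b, hab, rfl⟩
    rw [SetLike.mem_coe, RingHom.mem_ker, map_sub, mapDomainRingHom_apply, mapDomainRingHom_apply,
      mapDomain_single, mapDomain_single, hab, sub_self]

end AddMonoidAlgebra

noncomputable def toricExponentHom {n d : ℕ} (π : (Fin n → ℤ) →+ (Fin d → ℤ)) :
    (Fin n →₀ ℕ) →+ (Fin d → ℤ) :=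
  π.comp (((Nat.castAddMonoidHom ℤ).compLeft (Fin n)).comp Finsupp.coeFnAddHom)

theorem toricCharMap_eq_mapDomainAlgHom (k : Type*) [Field k] (n d : ℕ)
    (π : (Fin n → ℤ) →+ (Fin d → ℤ)) :
    toricCharMap k n d π = mapDomainAlgHom k k (toricExponentHom π) := by
  refine MvPolynomial.algHom_ext fun i => ?_
  have hcast : (fun j => ((Finsupp.single i 1 : Fin n →₀ ℕ) j : ℤ)) = Pi.single i 1 := by
    ext j; simp [Finsupp.single_apply, Pi.single_apply, eq_comm]
  rw [toricCharMap, MvPolynomial.aeval_X, mapDomainAlgHom_apply, MvPolynomial.X,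
    MvPolynomial.monomial, lsingle_apply, mapDomain_single]
  exact congrArg (single · 1) (congrArg π hcast).symm

/-- The kernel of the monomial map `ψ : k[x₁,…,xₙ] → k[ℤ^d]`, `xᵢ ↦ t^{π(eᵢ)}`, equals the ideal
generated by the binomials `x^u − x^v` for `u, v ∈ ℕⁿ` with `π(u) = π(v)`, and this kernel is a
prime ideal (the toric ideal of the lattice map `π`). -/
theorem statement9 (k : Type*) [Field k] (n d : ℕ) (π : (Fin n → ℤ) →+ (Fin d → ℤ)) :
    RingHom.ker (toricCharMap k n d π) =
        Ideal.span {f : MvPolynomial (Fin n) k |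
          ∃ u v : Fin n →₀ ℕ,
            π (fun i => (u i : ℤ)) = π (fun i => (v i : ℤ)) ∧
            f = MvPolynomial.monomial u (1 : k) - MvPolynomial.monomial v (1 : k)} ∧
      (RingHom.ker (toricCharMap k n d π)).IsPrime := by
  refine ⟨?_, RingHom.ker_isPrime _⟩
  rw [toricCharMap_eq_mapDomainAlgHom]
  -- `MvPolynomial.monomial u 1` is `single u 1`, so the binomial ideal is the span above.
  exact ker_mapDomainRingHom (toricExponentHom π)
end

section
/- Let r > a ≥ 1 be coprime integers, and let b₁,…,b_t be the unique integers with bᵢ ≥ 2 for all i such that r/(r−a) = b₁ − 1/(b₂ − 1/(⋯ − 1/b_t)) (the Jung–Hirzebruch continued fraction expansion of r/(r−a)). Define lattice vectors u₀ = (r,0), u₁ = (r−a,1), and u_{i+1} = bᵢ·uᵢ − u_{i−1} for 1 ≤ i ≤ t. Then each uᵢ lies in the monoid S = { (m,n) ∈ ℕ² : m + a·n ≡ 0 (mod r) }, and S is generated as a monoid by {u₀, u₁, …, u_{t+1}}. -/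
/-- The value of the Jung–Hirzebruch continued fraction `b₁ − 1/(b₂ − 1/(⋯ − 1/b_t))`
(note that `1/0 = 0` in `ℚ`, so the empty tail contributes nothing). -/
def jhContFrac : List ℤ → ℚ
  | [] => 0
  | b :: l => (b : ℚ) - 1 / jhContFrac l

/-- The sequence of lattice vectors `u₀ = (r,0)`, `u₁ = (r−a,1)`,
`u_{i+1} = bᵢ·uᵢ − u_{i−1}`, associated to the continued fraction entries `L = [b₁,…,b_t]`. -/
def jhSeq (r a : ℕ) (L : List ℤ) : ℕ → ℤ × ℤ
  | 0 => ((r : ℤ), 0)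
  | 1 => ((r : ℤ) - (a : ℤ), 1)
  | (i + 2) => L.getD i 0 • jhSeq r a L (i + 1) - jhSeq r a L i

/-!
Write `uᵢ = (pᵢ, qᵢ)`. The recurrence preserves the determinant `det(uᵢ, uᵢ₊₁) = r` and the
congruence `pᵢ + a qᵢ ≡ 0 (mod r)`, and since all `bᵢ ≥ 2` the `qᵢ` increase. As
`pᵢ / pᵢ₊₁ = [bᵢ₊₁, …, b_t]`, the first coordinates are positive up to `i = t` and `p_{t+1} = 0`;
coprimality then forces `u_{t+1} = (0, r)`. The rays through `u₀, …, u_{t+1}` therefore cut the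
positive quadrant into cones spanned by consecutive vectors, and since each such pair has
determinant `r`, every lattice point of `S` in such a cone is a non-negative integer combination
of its two spanning vectors (Cramer's rule).
-/

lemma one_lt_jhContFrac {L : List ℤ} (hL : L ≠ []) (hb : ∀ b ∈ L, 2 ≤ b) :
    1 < jhContFrac L := by
  induction L with
  | nil => exact absurd rfl hL
  | cons b l ih =>
    have hb2 : (2 : ℚ) ≤ b := by exact_mod_cast hb b List.mem_cons_self
    rcases eq_or_ne l [] with rfl | hl
    · simp only [jhContFrac, div_zero, sub_zero]
      linarith
    · have hw := ih hl fun x hx => hb x (List.mem_cons_of_mem _ hx)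
      have : 1 / jhContFrac l < 1 := by rw [div_lt_one (by linarith)]; exact hw
      simp only [jhContFrac]
      linarith

lemma pos_and_eq_zero_of_eq_jhContFrac_mul {L : List ℤ} (hL : L ≠ []) (hb : ∀ b ∈ L, 2 ≤ b)
    (x : ℕ → ℚ) (hx : ∀ i, x (i + 2) = L.getD i 0 * x (i + 1) - x i)
    (h0 : x 0 = jhContFrac L * x 1) (h1 : 0 < x 1) :
    (∀ i, 1 ≤ i → i ≤ L.length → 0 < x i) ∧ x (L.length + 1) = 0 := by
  induction L generalizing x with
  | nil => exact absurd rfl hL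
  | cons b l ih =>
    have hx2 : x 2 = x 1 / jhContFrac l := by
      rw [hx 0, h0]
      simp only [List.getD_cons_zero, jhContFrac]
      ring
    rcases eq_or_ne l [] with rfl | hl
    · refine ⟨fun i hi hi' => ?_, ?_⟩
      · obtain rfl : i = 1 := by simp only [List.length_cons, List.length_nil] at hi'; omega
        exact h1
      · simpa [jhContFrac] using hx2
    · -- `x₁ / x₂ = [b₂, …, b_t]`, so the shifted sequence satisfies the hypotheses for `l`.
      have hw := one_lt_jhContFrac hl fun c hc => hb c (List.mem_cons_of_mem _ hc)
      have hpos2 : 0 < x 2 := by rw [hx2]; exact div_pos h1 (by linarith)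
      obtain ⟨hpos, hlast⟩ := ih hl (fun c hc => hb c (List.mem_cons_of_mem _ hc))
        (fun i => x (i + 1)) (fun i => hx (i + 1))
        (by rw [hx2]; field_simp) hpos2
      refine ⟨fun i hi hi' => ?_, hlast⟩
      rcases Nat.exists_eq_add_of_le' hi with ⟨j, rfl⟩
      rcases j.eq_zero_or_pos with rfl | hj
      · exact h1
      · exact hpos j hj (by simpa using hi')

lemma nonneg_and_lt_succ_of_recurrence {L : List ℤ} (hb : ∀ b ∈ L, 2 ≤ b) (y : ℕ → ℤ)
    (hy : ∀ i, y (i + 2) = L.getD i 0 * y (i + 1) - y i) (h0 : 0 ≤ y 0) (h01 : y 0 < y 1) :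
    ∀ i ≤ L.length, 0 ≤ y i ∧ y i < y (i + 1) := by
  intro i hi
  induction i with
  | zero => exact ⟨h0, h01⟩
  | succ n ih =>
    obtain ⟨hn0, hn1⟩ := ih (by omega)
    have hbn : 2 ≤ L.getD n 0 := hb _ <| by
      rw [List.getD_eq_getElem _ _ (by omega)]; exact List.getElem_mem _
    refine ⟨by omega, ?_⟩
    rw [hy]
    nlinarith

def cross (u v : ℤ × ℤ) : ℤ := u.1 * v.2 - u.2 * v.1

lemma cross_swap (u v : ℤ × ℤ) : cross v u = -cross u v := by
  unfold cross; ring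

lemma dvd_cross {r a : ℤ} {u v : ℤ × ℤ} (hu : r ∣ u.1 + a * u.2) (hv : r ∣ v.1 + a * v.2) :
    r ∣ cross u v := by
  have : cross u v = v.2 * (u.1 + a * u.2) - u.2 * (v.1 + a * v.2) := by unfold cross; ring
  rw [this]
  exact dvd_sub (hu.mul_left _) (hv.mul_left _)

/-- Cramer's rule: `det(u, v) • p = det(p, v) • u + det(u, p) • v`. -/
lemma exists_nsmul_add_nsmul_of_cross_eq {r : ℤ} (hr : 0 < r) {u v p : ℤ × ℤ}
    (huv : cross u v = r) (hup : 0 ≤ cross u p) (hpv : 0 ≤ cross p v)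
    (hrup : r ∣ cross u p) (hrpv : r ∣ cross p v) : ∃ m n : ℕ, p = m • u + n • v := by
  obtain ⟨β, hβ⟩ := hrup
  obtain ⟨α, hα⟩ := hrpv
  lift α to ℕ using nonneg_of_mul_nonneg_right (hα ▸ hpv) hr
  lift β to ℕ using nonneg_of_mul_nonneg_right (hβ ▸ hup) hr
  unfold cross at huv hα hβ
  refine ⟨α, β, Prod.ext (mul_left_cancel₀ hr.ne' ?_) (mul_left_cancel₀ hr.ne' ?_)⟩
  · rw [Prod.fst_add, Prod.smul_fst, Prod.smul_fst, nsmul_eq_mul, nsmul_eq_mul]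
    linear_combination u.1 * hα + v.1 * hβ - p.1 * huv
  · rw [Prod.snd_add, Prod.smul_snd, Prod.smul_snd, nsmul_eq_mul, nsmul_eq_mul]
    linear_combination u.2 * hα + v.2 * hβ - p.2 * huv

lemma exists_sign_change {α : Type*} [LinearOrder α] {c : α} (g : ℕ → α) (N : ℕ)
    (h0 : c ≤ g 0) (hN : g (N + 1) ≤ c) : ∃ i ≤ N, c ≤ g i ∧ g (i + 1) ≤ c := by
  induction N with
  | zero => exact ⟨0, le_rfl, h0, hN⟩
  | succ n ih =>
    rcases le_total (g (n + 1)) c with h | h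
    · obtain ⟨i, hi, hgi⟩ := ih h
      exact ⟨i, hi.trans n.le_succ, hgi⟩
    · exact ⟨n + 1, le_rfl, h, hN⟩

def invariantMonoid (r a : ℤ) : AddSubmonoid (ℤ × ℤ) where
  carrier := {p | 0 ≤ p.1 ∧ 0 ≤ p.2 ∧ r ∣ p.1 + a * p.2}
  zero_mem' := by simp
  add_mem' := by
    rintro x y ⟨hx1, hx2, hx⟩ ⟨hy1, hy2, hy⟩
    refine ⟨add_nonneg hx1 hy1, add_nonneg hx2 hy2, ?_⟩
    have : (x + y).1 + a * (x + y).2 = (x.1 + a * x.2) + (y.1 + a * y.2) := by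
      simp only [Prod.fst_add, Prod.snd_add]; ring
    exact this ▸ dvd_add hx hy

lemma mem_invariantMonoid {r a : ℤ} {p : ℤ × ℤ} :
    p ∈ invariantMonoid r a ↔ 0 ≤ p.1 ∧ 0 ≤ p.2 ∧ r ∣ p.1 + a * p.2 :=
  Iff.rfl

section jhSeq

variable (r a : ℕ) (L : List ℤ)

lemma jhSeq_fst_add_two (i : ℕ) :
    (jhSeq r a L (i + 2)).1 = L.getD i 0 * (jhSeq r a L (i + 1)).1 - (jhSeq r a L i).1 :=
  rfl

lemma jhSeq_snd_add_two (i : ℕ) :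
    (jhSeq r a L (i + 2)).2 = L.getD i 0 * (jhSeq r a L (i + 1)).2 - (jhSeq r a L i).2 :=
  rfl

lemma cross_jhSeq_succ (i : ℕ) : cross (jhSeq r a L i) (jhSeq r a L (i + 1)) = r := by
  induction i with
  | zero => simp [cross, jhSeq]
  | succ n ih =>
    unfold cross at ih ⊢
    rw [jhSeq_fst_add_two, jhSeq_snd_add_two]
    linear_combination ih

lemma dvd_jhSeq (i : ℕ) : (r : ℤ) ∣ (jhSeq r a L i).1 + a * (jhSeq r a L i).2 := by
  induction i using Nat.twoStepInduction with
  | zero => simp [jhSeq]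
  | one => simp [jhSeq]
  | more n hn hn1 =>
    rw [jhSeq_fst_add_two, jhSeq_snd_add_two]
    have : L.getD n 0 * (jhSeq r a L (n + 1)).1 - (jhSeq r a L n).1
          + a * (L.getD n 0 * (jhSeq r a L (n + 1)).2 - (jhSeq r a L n).2)
        = L.getD n 0 * ((jhSeq r a L (n + 1)).1 + a * (jhSeq r a L (n + 1)).2)
          - ((jhSeq r a L n).1 + a * (jhSeq r a L n).2) := by ring
    rw [this]
    exact dvd_sub (hn1.mul_left _) hn

variable {r a L}

lemma jhSeq_fst_pos_and_eq_zero (har : a < r) (hL : L ≠ []) (hb : ∀ b ∈ L, 2 ≤ b)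
    (hcf : (r : ℚ) / ((r : ℚ) - (a : ℚ)) = jhContFrac L) :
    (∀ i, 1 ≤ i → i ≤ L.length → 0 < (jhSeq r a L i).1) ∧
      (jhSeq r a L (L.length + 1)).1 = 0 := by
  have hra : (0 : ℚ) < r - a := sub_pos.mpr (by exact_mod_cast har)
  have := pos_and_eq_zero_of_eq_jhContFrac_mul hL hb (fun i => ((jhSeq r a L i).1 : ℚ))
    (fun i => by push_cast [jhSeq_fst_add_two]; rfl)
    (by rw [← hcf]; simp only [jhSeq, Int.cast_natCast, Int.cast_sub]; field_simp)
    (by simpa [jhSeq] using hra)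
  exact_mod_cast this

lemma jhSeq_snd_nonneg_and_lt_succ (hb : ∀ b ∈ L, 2 ≤ b) :
    ∀ i ≤ L.length, 0 ≤ (jhSeq r a L i).2 ∧ (jhSeq r a L i).2 < (jhSeq r a L (i + 1)).2 :=
  nonneg_and_lt_succ_of_recurrence hb (fun i => (jhSeq r a L i).2) (jhSeq_snd_add_two r a L)
    (by simp [jhSeq]) (by simp [jhSeq])

lemma jhSeq_length_succ (hcop : Nat.Coprime r a) (har : a < r) (hL : L ≠ [])
    (hb : ∀ b ∈ L, 2 ≤ b) (hcf : (r : ℚ) / ((r : ℚ) - (a : ℚ)) = jhContFrac L) :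
    jhSeq r a L (L.length + 1) = (0, (r : ℤ)) := by
  have hp := (jhSeq_fst_pos_and_eq_zero har hL hb hcf).2
  refine Prod.ext hp ?_
  have hdet := cross_jhSeq_succ r a L L.length
  unfold cross at hdet
  rw [hp, mul_zero, sub_zero] at hdet
  have hq := jhSeq_snd_nonneg_and_lt_succ (a := a) (r := r) hb L.length le_rfl
  have hdvd : (r : ℤ) ∣ (jhSeq r a L (L.length + 1)).2 := by
    have h := dvd_jhSeq r a L (L.length + 1)
    rw [hp, zero_add] at h
    exact (Nat.isCoprime_iff_coprime.mpr hcop).dvd_of_dvd_mul_left h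
  exact Int.dvd_antisymm (by omega) (by positivity) (Dvd.intro_left _ hdet) hdvd

lemma jhSeq_mem_invariantMonoid (har : a < r) (hL : L ≠ [])
    (hb : ∀ b ∈ L, 2 ≤ b) (hcf : (r : ℚ) / ((r : ℚ) - (a : ℚ)) = jhContFrac L) :
    ∀ i ≤ L.length + 1, jhSeq r a L i ∈ invariantMonoid r a := by
  obtain ⟨hpos, hlast⟩ := jhSeq_fst_pos_and_eq_zero har hL hb hcf
  intro i hi
  refine ⟨?_, ?_, dvd_jhSeq r a L i⟩
  · rcases Nat.eq_zero_or_pos i with rfl | hi0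
    · simp [jhSeq]
    rcases hi.lt_or_eq with hi | rfl
    · exact (hpos i hi0 (by omega)).le
    · exact hlast.ge
  · rcases i with _ | j
    · simp [jhSeq]
    · have := jhSeq_snd_nonneg_and_lt_succ (a := a) (r := r) hb j (by omega)
      omega

theorem closure_jhSeq_eq_invariantMonoid (hcop : Nat.Coprime r a) (har : a < r) (hL : L ≠ [])
    (hb : ∀ b ∈ L, 2 ≤ b) (hcf : (r : ℚ) / ((r : ℚ) - (a : ℚ)) = jhContFrac L) :
    AddSubmonoid.closure {q : ℤ × ℤ | ∃ i ≤ L.length + 1, q = jhSeq r a L i} =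
      invariantMonoid r a := by
  refine le_antisymm (AddSubmonoid.closure_le.mpr ?_) fun p hp => ?_
  · rintro _ ⟨i, hi, rfl⟩
    exact jhSeq_mem_invariantMonoid har hL hb hcf i hi
  obtain ⟨hp1, hp2, hpd⟩ := hp
  have hr : (0 : ℤ) < r := by omega
  obtain ⟨i, hi, hcross, hcross_succ⟩ :=
    exists_sign_change (c := 0) (fun i => cross (jhSeq r a L i) p) L.length
      (by simp only [cross, jhSeq]; nlinarith)
      (by rw [jhSeq_length_succ hcop har hL hb hcf]; simp only [cross]; nlinarith)
  have hcross_succ' : 0 ≤ cross p (jhSeq r a L (i + 1)) := by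
    rw [cross_swap]; exact neg_nonneg.mpr hcross_succ
  obtain ⟨m, n, rfl⟩ := exists_nsmul_add_nsmul_of_cross_eq hr (cross_jhSeq_succ r a L i)
    hcross hcross_succ' (dvd_cross (dvd_jhSeq r a L i) hpd) (dvd_cross hpd (dvd_jhSeq r a L _))
  have hmem : ∀ j ≤ L.length + 1,
      jhSeq r a L j ∈ AddSubmonoid.closure {q : ℤ × ℤ | ∃ i ≤ L.length + 1, q = jhSeq r a L i} :=
    fun j hj => AddSubmonoid.subset_closure ⟨j, hj, rfl⟩
  exact add_mem (nsmul_mem (hmem i (by omega)) m) (nsmul_mem (hmem (i + 1) (by omega)) n)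

end jhSeq

theorem statement11_general (r a : ℕ) (hcop : Nat.Coprime r a) (har : a < r)
    (L : List ℤ) (hL : L ≠ []) (hb : ∀ b ∈ L, 2 ≤ b)
    (hcf : (r : ℚ) / ((r : ℚ) - (a : ℚ)) = jhContFrac L) :
    (∀ i ≤ L.length + 1,
        0 ≤ (jhSeq r a L i).1 ∧ 0 ≤ (jhSeq r a L i).2 ∧
        (r : ℤ) ∣ (jhSeq r a L i).1 + (a : ℤ) * (jhSeq r a L i).2) ∧
      ∀ p : ℤ × ℤ,
        p ∈ AddSubmonoid.closure {q : ℤ × ℤ | ∃ i ≤ L.length + 1, q = jhSeq r a L i} ↔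
          (0 ≤ p.1 ∧ 0 ≤ p.2 ∧ (r : ℤ) ∣ p.1 + (a : ℤ) * p.2) := by
  refine ⟨jhSeq_mem_invariantMonoid har hL hb hcf, fun p => ?_⟩
  rw [closure_jhSeq_eq_invariantMonoid hcop har hL hb hcf, mem_invariantMonoid]

/-- Let `r > a ≥ 1` be coprime and let `b₁,…,b_t ≥ 2` be the Jung–Hirzebruch continued
fraction entries of `r/(r−a)`.  With `u₀ = (r,0)`, `u₁ = (r−a,1)` and
`u_{i+1} = bᵢuᵢ − u_{i−1}`, every `uᵢ` (for `0 ≤ i ≤ t+1`) lies in the monoid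
`S = {(m,n) ∈ ℕ² : m + a·n ≡ 0 (mod r)}`, and `S` is generated as a monoid by
`u₀, u₁, …, u_{t+1}`. -/
theorem statement11 (r a : ℕ) (hcop : Nat.Coprime r a) (ha : 1 ≤ a) (har : a < r)
    (L : List ℤ) (hL : L ≠ []) (hb : ∀ b ∈ L, 2 ≤ b)
    (hcf : (r : ℚ) / ((r : ℚ) - (a : ℚ)) = jhContFrac L) :
    (∀ i ≤ L.length + 1,
        0 ≤ (jhSeq r a L i).1 ∧ 0 ≤ (jhSeq r a L i).2 ∧
        (r : ℤ) ∣ (jhSeq r a L i).1 + (a : ℤ) * (jhSeq r a L i).2) ∧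
      ∀ p : ℤ × ℤ,
        p ∈ AddSubmonoid.closure {q : ℤ × ℤ | ∃ i ≤ L.length + 1, q = jhSeq r a L i} ↔
          (0 ≤ p.1 ∧ 0 ≤ p.2 ∧ (r : ℤ) ∣ p.1 + (a : ℤ) * p.2) :=
  statement11_general r a hcop har L hL hb hcf
end

section
/- Let k be a field, S ⊆ ℤ^d a finitely generated submonoid that generates ℤ^d as a group, ν : ℤ^d → ℤ a group homomorphism with ν(S) ⊆ ℕ, and M = ker ν. Grade the monoid algebra k[S] by ℤ by declaring the monomial t^u to have degree ν(u), fix u₀ ∈ S, and form the localization k[S][(t^{u₀})^{-1}] at the homogeneous element t^{u₀}, with its induced ℤ-grading. Then the degree-zero subalgebra of k[S][(t^{u₀})^{-1}] is isomorphic as a k-algebra to the monoid algebra k[S₀] of the submonoid S₀ = { u − j·u₀ : u ∈ S, j ∈ ℕ, ν(u) = j·ν(u₀) } of M. -/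
/-- The shifted monoid `S₀ = { u − j·u₀ : u ∈ S, j ∈ ℕ, ν(u) = j·ν(u₀) }`, a submonoid of
`M = ker ν` giving the degree-zero part of the localization of `k[S]` at `t^{u₀}`. -/
def degreeZeroShiftMonoid {d : ℕ} (S : AddSubmonoid (Fin d → ℤ)) (ν : (Fin d → ℤ) →+ ℤ)
    (u₀ : Fin d → ℤ) : AddSubmonoid (Fin d → ℤ) where
  carrier := {w | ∃ u ∈ S, ∃ j : ℕ, ν u = (j : ℤ) * ν u₀ ∧ w = u - (j : ℕ) • u₀}
  zero_mem' := ⟨0, S.zero_mem, 0, by simp, by simp⟩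
  add_mem' := by
    rintro w₁ w₂ ⟨u₁, hu₁, j₁, h₁, rfl⟩ ⟨u₂, hu₂, j₂, h₂, rfl⟩
    refine ⟨u₁ + u₂, S.add_mem hu₁ hu₂, j₁ + j₂, ?_, ?_⟩
    · rw [map_add, h₁, h₂]
      push_cast
      ring
    · rw [add_smul]
      abel

/-!
The element `t^{u₀}` becomes a unit in the group algebra `k[ℤ^d]`, so `k[S][(t^{u₀})⁻¹]` embeds
into `k[ℤ^d]`, sending `f / (t^{u₀})^j` to `f` shifted by `-j • u₀`. Such a fraction with `f`
homogeneous of degree `j • ν(u₀)` is sent to an element supported in `S₀`, and conversely, so the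
degree-zero part is carried isomorphically onto the copy of `k[S₀]` inside `k[ℤ^d]`.
-/

theorem IsLocalization.lift_injective_of_injective {R S P : Type*} [CommSemiring R]
    [CommSemiring S] [CommSemiring P] [Algebra R S] {M : Submonoid R} [IsLocalization M S]
    {g : R →+* P} (hg : ∀ y : M, IsUnit (g y)) (hinj : Function.Injective g) :
    Function.Injective (lift hg : S → P) :=
  (lift_injective_iff hg).mpr fun x y =>
    ⟨fun h => by simpa only [lift_eq] using congrArg (lift hg) h, fun h => congrArg _ (hinj h)⟩

theorem Localization.Away.exists_eq_mk_pow {R : Type*} [CommSemiring R] {r : R}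
    (x : Localization.Away r) :
    ∃ (f : R) (j : ℕ),
      x = Localization.mk f ⟨r ^ j, Submonoid.pow_mem _ (Submonoid.mem_powers r) j⟩ := by
  induction x using Localization.induction_on with
  | H p =>
    obtain ⟨f, _, j, rfl⟩ := p
    exact ⟨f, j, rfl⟩

noncomputable def AlgHom.comapRangeAlgEquiv {R A B C : Type*} [CommSemiring R] [Semiring A]
    [Semiring B] [Semiring C] [Algebra R A] [Algebra R B] [Algebra R C]
    (ι : A →ₐ[R] C) (κ : B →ₐ[R] C) (hι : Function.Injective ι) (hκ : Function.Injective κ)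
    (h : κ.range ≤ ι.range) : κ.range.comap ι ≃ₐ[R] B :=
  (Subalgebra.equivMapOfInjective _ ι hι).trans <|
    (Subalgebra.equivOfEq _ _ (by rw [Subalgebra.map_comap_eq, inf_eq_left.mpr h])).trans
      (AlgEquiv.ofInjective κ hκ).symm

namespace AddMonoidAlgebra

variable {k : Type*} [CommSemiring k]

theorem mem_range_mapDomainAlgHom_subtype_iff {G : Type*} [AddMonoid G] (T : AddSubmonoid G)
    (g : AddMonoidAlgebra k G) :
    g ∈ (mapDomainAlgHom k k T.subtype).range ↔ ↑g.coeff.support ⊆ (T : Set G) := by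
  classical
  constructor
  · rintro ⟨g, rfl⟩
    refine (Finset.coe_subset.mpr Finsupp.mapDomain_support).trans ?_
    simp only [Finset.coe_image, Set.image_subset_iff]
    exact fun t _ => t.2
  · intro hg
    exact ⟨comapDomain _ Subtype.val_injective g,
      mapDomain_comapDomain (by simpa using hg) _⟩

variable {G : Type*} [AddCommGroup G]

theorem isUnit_single_one (a : G) : IsUnit (single a (1 : k)) :=
  .of_mul_eq_one (single (-a) 1) (by simp [single_mul_single, one_def])

variable (k) in
noncomputable def awayMonomialToGroupAlgebra (S : AddSubmonoid G) (a : S) :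
    Localization.Away (single a (1 : k)) →ₐ[k] AddMonoidAlgebra k G :=
  IsLocalization.Away.liftAlgHom (f := mapDomainAlgHom k k S.subtype) (single a 1)
    (by simpa [mapDomain_single] using isUnit_single_one (k := k) (a : G))

variable {S : AddSubmonoid G} {a : S}

theorem awayMonomialToGroupAlgebra_mk_pow (f : AddMonoidAlgebra k S) (j : ℕ)
    (hj : single a (1 : k) ^ j ∈ Submonoid.powers (single a (1 : k))) :
    awayMonomialToGroupAlgebra k S a (Localization.mk f ⟨_, hj⟩) =
      mapDomain (fun u : S => (u : G) - j • (a : G)) f := by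
  rw [awayMonomialToGroupAlgebra, IsLocalization.Away.liftAlgHom_apply, Localization.mk_eq_mk',
    IsLocalization.Away.lift, IsLocalization.lift_mk'_spec]
  simp only [AlgHom.toRingHom_eq_coe, RingHom.coe_coe, mapDomainAlgHom_apply, single_pow,
    one_pow, mapDomain_single, AddSubmonoid.coe_subtype]
  induction f using induction_linear with
  | zero => simp
  | add f g hf hg => rw [mapDomain_add, hf, hg, mapDomain_add, mul_add]
  | single u c => simp [mapDomain_single, single_mul_single]

theorem awayMonomialToGroupAlgebra_injective :
    Function.Injective (awayMonomialToGroupAlgebra k S a) :=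
  IsLocalization.lift_injective_of_injective _ <|
    mapDomain_injective (R := k) Subtype.val_injective

theorem mk_pow_mem_comap_range_iff (T : AddSubmonoid G) (f : AddMonoidAlgebra k S) (j : ℕ)
    (hj : single a (1 : k) ^ j ∈ Submonoid.powers (single a (1 : k))) :
    Localization.mk f ⟨_, hj⟩ ∈
        (mapDomainAlgHom k k T.subtype).range.comap (awayMonomialToGroupAlgebra k S a) ↔
      ∀ u ∈ f.coeff.support, (u : G) - j • (a : G) ∈ T := by
  classical
  have hinj : Function.Injective fun u : S => (u : G) - j • (a : G) :=
    fun u v h => Subtype.ext (sub_left_injective h)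
  rw [Subalgebra.mem_comap, awayMonomialToGroupAlgebra_mk_pow,
    mem_range_mapDomainAlgHom_subtype_iff, coeff_mapDomain,
    Finsupp.mapDomain_support_of_injective hinj, Finset.coe_image, Set.image_subset_iff]
  rfl

theorem range_mapDomainAlgHom_le_range_awayMonomialToGroupAlgebra (T : AddSubmonoid G)
    (hT : ∀ t ∈ T, ∃ (u : S) (j : ℕ), t = (u : G) - j • (a : G)) :
    (mapDomainAlgHom k k T.subtype).range ≤ (awayMonomialToGroupAlgebra k S a).range := by
  rintro _ ⟨g, rfl⟩
  induction g using induction_linear with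
  | zero => simp
  | add g h hg hh => simpa only [map_add] using add_mem hg hh
  | single t c =>
    obtain ⟨u, j, ht⟩ := hT t t.2
    refine ⟨Localization.mk (single u c) ⟨_, Submonoid.pow_mem _ (Submonoid.mem_powers _) j⟩,
      (awayMonomialToGroupAlgebra_mk_pow _ j _).trans ?_⟩
    simp [mapDomain_single, ht]

end AddMonoidAlgebra

theorem sub_nsmul_mem_degreeZeroShiftMonoid_iff {d : ℕ} {S : AddSubmonoid (Fin d → ℤ)}
    {ν : (Fin d → ℤ) →+ ℤ} {u₀ u : Fin d → ℤ} (hu : u ∈ S) (j : ℕ) :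
    u - j • u₀ ∈ degreeZeroShiftMonoid S ν u₀ ↔ ν u = j * ν u₀ := by
  refine ⟨fun ⟨u', _, j', hu', heq⟩ => ?_, fun h => ⟨u, hu, j, h, rfl⟩⟩
  have := congrArg ν heq
  rw [map_sub, map_sub, map_nsmul, map_nsmul, hu', nsmul_eq_mul, nsmul_eq_mul] at this
  linarith

open AddMonoidAlgebra in
theorem statement15_general (k : Type*) [Field k] (d : ℕ) (S : AddSubmonoid (Fin d → ℤ))
    (ν : (Fin d → ℤ) →+ ℤ) (u₀ : Fin d → ℤ) (hu₀ : u₀ ∈ S) :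
    ∃ A : Subalgebra k
        (Localization.Away (AddMonoidAlgebra.single (⟨u₀, hu₀⟩ : S) (1 : k))),
      (A : Set (Localization.Away (AddMonoidAlgebra.single (⟨u₀, hu₀⟩ : S) (1 : k)))) =
        {x | ∃ (f : AddMonoidAlgebra k S) (j : ℕ),
          (∀ u ∈ f.coeff.support, ν (u : Fin d → ℤ) = (j : ℤ) * ν u₀) ∧
          x = Localization.mk f
            ⟨(AddMonoidAlgebra.single (⟨u₀, hu₀⟩ : S) (1 : k)) ^ j,
              Submonoid.pow_mem _
                (Submonoid.mem_powers (AddMonoidAlgebra.single (⟨u₀, hu₀⟩ : S) (1 : k))) j⟩} ∧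
      Nonempty (A ≃ₐ[k] AddMonoidAlgebra k (degreeZeroShiftMonoid S ν u₀)) := by
  set S₀ := degreeZeroShiftMonoid S ν u₀
  have hS₀ : ∀ w ∈ S₀, ∃ (u : S) (j : ℕ), w = (u : Fin d → ℤ) - j • u₀ :=
    fun _ ⟨u, hu, j, _, hw⟩ => ⟨⟨u, hu⟩, j, hw⟩
  refine ⟨(mapDomainAlgHom k k S₀.subtype).range.comap
    (awayMonomialToGroupAlgebra k S ⟨u₀, hu₀⟩), Set.ext fun x => ⟨fun hx => ?_, ?_⟩,
    ⟨AlgHom.comapRangeAlgEquiv _ _ awayMonomialToGroupAlgebra_injective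
      (mapDomain_injective Subtype.val_injective)
      (range_mapDomainAlgHom_le_range_awayMonomialToGroupAlgebra S₀ hS₀)⟩⟩
  · obtain ⟨f, j, rfl⟩ := Localization.Away.exists_eq_mk_pow x
    exact ⟨f, j, fun u hu => (sub_nsmul_mem_degreeZeroShiftMonoid_iff u.2 j).mp
      ((mk_pow_mem_comap_range_iff S₀ f j _).mp hx u hu), rfl⟩
  · rintro ⟨f, j, hf, rfl⟩
    exact (mk_pow_mem_comap_range_iff S₀ f j _).mpr fun u hu =>
      (sub_nsmul_mem_degreeZeroShiftMonoid_iff u.2 j).mpr (hf u hu)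

/-- Let `S ⊆ ℤ^d` be a finitely generated submonoid generating `ℤ^d` as a group, let
`ν : ℤ^d → ℤ` satisfy `ν(S) ⊆ ℕ`, grade `k[S]` by `deg t^u = ν(u)`, and fix `u₀ ∈ S`.
The degree-zero part of the localization `k[S][(t^{u₀})^{-1}]` — namely the set of fractions
`f/(t^{u₀})^j` with `f` homogeneous of degree `j·ν(u₀)` — is a `k`-subalgebra, and it is
isomorphic as a `k`-algebra to the monoid algebra `k[S₀]` of
`S₀ = { u − j·u₀ : u ∈ S, j ∈ ℕ, ν(u) = j·ν(u₀) } ⊆ ker ν`. -/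
theorem statement15 (k : Type*) [Field k] (d : ℕ) (S : AddSubmonoid (Fin d → ℤ))
    (hfg : S.FG) (hgen : AddSubgroup.closure (S : Set (Fin d → ℤ)) = ⊤)
    (ν : (Fin d → ℤ) →+ ℤ) (hν : ∀ s ∈ S, 0 ≤ ν s) (u₀ : Fin d → ℤ) (hu₀ : u₀ ∈ S) :
    ∃ A : Subalgebra k
        (Localization.Away (AddMonoidAlgebra.single (⟨u₀, hu₀⟩ : S) (1 : k))),
      (A : Set (Localization.Away (AddMonoidAlgebra.single (⟨u₀, hu₀⟩ : S) (1 : k)))) =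
        {x | ∃ (f : AddMonoidAlgebra k S) (j : ℕ),
          (∀ u ∈ f.coeff.support, ν (u : Fin d → ℤ) = (j : ℤ) * ν u₀) ∧
          x = Localization.mk f
            ⟨(AddMonoidAlgebra.single (⟨u₀, hu₀⟩ : S) (1 : k)) ^ j,
              Submonoid.pow_mem _
                (Submonoid.mem_powers (AddMonoidAlgebra.single (⟨u₀, hu₀⟩ : S) (1 : k))) j⟩} ∧
      Nonempty (A ≃ₐ[k] AddMonoidAlgebra k (degreeZeroShiftMonoid S ν u₀)) :=
  statement15_general k d S ν u₀ hu₀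
end
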